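/- Base case of the Statement Property for destructive assignment: Let AS = (X = e (pa,A)) be a destructive assignment and □ = (σ, γ, μ, β, δ) the initial environments, and suppose the forward execution consists of the single identifier step (X = e (pa,A) | □) →^m_a (skip (pa,m:A) | □') via rule D1a, where □' = □ with σ updated at location l = evalV(X,pa,γ) to the value v of e, and δ updated by pushing (m, σ(l)) onto stack X. Then the inverse execution of inv⁺(AS) = (X = e (pa,m:A)) consists of the single identifier step via rule D1r to (skip (pa,A) | □₁) where □₁ restores σ(l) to the old value popped from stack X in δ, so that □₁ ≈ □; in particular the original data store and auxiliary store are restored exactly. -/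
import Mathlib


namespace Stmt12

/-- The relevant part of the program state: the data store `σ` (integer
values at memory locations) and the auxiliary store `δ` (a stack of pairs
(identifier, old value) for each variable). All other environments are
untouched by the rules D1a/D1r. -/
structure St (Loc Var : Type) where
  /-- the data store `σ` -/
  store : Loc → ℤ
  /-- the auxiliary store `δ` (one stack per variable) -/
  aux : Var → List (ℕ × ℤ)

/-- The fragment of annotated/inverted program syntax needed for a single
destructive assignment: `skip (pa, A)` and `X = e (pa, A)`, each carrying a
statement path and an identifier stack. -/
inductive Prog (Var Expr Path : Type) where
  | skip (pa : Path) (A : List ℕ)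
  | asgn (X : Var) (e : Expr) (pa : Path) (A : List ℕ)

variable {Loc Var Expr Path VEnv : Type} [DecidableEq Loc] [DecidableEq Var]

/-- Forward rule D1a for a destructive assignment `X = e (pa, A)`: taking the
next identifier `m`, the expression `e` evaluates to `v`, the variable `X` is
bound to location `l = evalV X pa γ`, the old value `σ(l)` is pushed
(paired with `m`) onto the stack `X` of the auxiliary store, `σ(l)` is
overwritten with `v`, and `m` is pushed onto the identifier stack `A`. -/
inductive D1a (evalV : Var → Path → VEnv → Loc)
    (evalE : Expr → Path → (Loc → ℤ) → VEnv → ℤ) (γ : VEnv) :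
    ℕ → Prog Var Expr Path × St Loc Var → Prog Var Expr Path × St Loc Var → Prop
  | step (X : Var) (e : Expr) (pa : Path) (A : List ℕ) (m : ℕ) (s : St Loc Var)
      (l : Loc) (v : ℤ)
      (hl : evalV X pa γ = l) (hv : evalE e pa s.store γ = v) :
      D1a evalV evalE γ m (Prog.asgn X e pa A, s)
        (Prog.skip pa (m :: A),
          ⟨Function.update s.store l v,
           Function.update s.aux X ((m, s.store l) :: s.aux X)⟩)

/-- Inverse rule D1r for a destructive assignment `X = e (pa, m:A)`: the most
recently used identifier `m` is at the head of the identifier stack and the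
pair `(m, v₁)` is at the head of the stack `X` of the auxiliary store; both
are popped and `σ(l)` is restored to the old value `v₁`. -/
inductive D1r (evalV : Var → Path → VEnv → Loc) (γ : VEnv) :
    ℕ → Prog Var Expr Path × St Loc Var → Prog Var Expr Path × St Loc Var → Prop
  | step (X : Var) (e : Expr) (pa : Path) (A : List ℕ) (m : ℕ) (s : St Loc Var)
      (l : Loc) (v₁ : ℤ) (rest : List (ℕ × ℤ))
      (hl : evalV X pa γ = l) (hd : s.aux X = (m, v₁) :: rest) :
      D1r evalV γ m (Prog.asgn X e pa (m :: A), s)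
        (Prog.skip pa A,
          ⟨Function.update s.store l v₁, Function.update s.aux X rest⟩)

end Stmt12

/-- Base case of the Statement Property for destructive assignment: if the
forward execution of `AS = (X = e (pa,A))` consists of the single identifier
step `(X = e (pa,A) | □) →^m_a (skip (pa,m:A) | □')` via rule D1a, then the
inverse execution of `inv⁺(AS) = (X = e (pa,m:A))` consists of the single
identifier step via rule D1r to `(skip (pa,A) | □₁)` where `□₁` is exactly the
original state `□` (so `□₁ ≈ □`): the original data store and auxiliary store
are restored exactly. -/
theorem statement_property_base_assignment
    {Loc Var Expr Path VEnv : Type} [DecidableEq Loc] [DecidableEq Var]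
    (evalV : Var → Path → VEnv → Loc)
    (evalE : Expr → Path → (Loc → ℤ) → VEnv → ℤ) (γ : VEnv)
    (X : Var) (e : Expr) (pa : Path) (A : List ℕ) (m : ℕ)
    (s s' : Stmt12.St Loc Var)
    (h : Stmt12.D1a evalV evalE γ m (Stmt12.Prog.asgn X e pa A, s)
          (Stmt12.Prog.skip pa (m :: A), s')) :
    Stmt12.D1r evalV γ m (Stmt12.Prog.asgn X e pa (m :: A), s')
      (Stmt12.Prog.skip pa A, s) := by
  cases h with
  | step X e pa A m s l v hl hv =>
    have := Stmt12.D1r.step (evalV := evalV) (γ := γ) X e pa A m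
      ⟨Function.update s.store l v,
       Function.update s.aux X ((m, s.store l) :: s.aux X)⟩
      l (s.store l) (s.aux X) hl (by simp)
    simpa [Function.update_idem, Function.update_eq_self] using this
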